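/- arXiv:1606.09365 — 4 statements merged into one kernel-verified Lean document; each statement's English description precedes it below -/
import Mathlib

section
/- Let f : ℝ^n → ℝ be continuously differentiable, μ-strongly convex and L-smooth with 0 < μ < L. Let x* be a global minimizer of f with f* = f(x*). If x₁ is obtained from x₀ by one step of gradient descent with exact line search (i.e., x₁ = x₀ - γ∇f(x₀) where γ minimizes γ ↦ f(x₀ - γ∇f(x₀)) over γ ∈ ℝ), then f(x₁) - f* ≤ ((L-μ)/(L+μ))² (f(x₀) - f*). -/
/-!
Exact line search does at least as well as the fixed step `2 / (L + μ)`, so it suffices to bound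
one such step. For `f ∈ F_{μ,L}` the function `f - μ/2 ‖·‖²` is convex with an `(L - μ)`-quadratic
upper bound, which yields an interpolation inequality between any two points. A nonnegative
combination of it at the pairs `(y, x₀)`, `(x₀, x*)`, `(y, x*)` (with `y` the fixed-step iterate and
`∇f x* = 0`) and of the square `‖∇f x₀ + ∇f y - (2μL/(L+μ)) (x₀ - x*)‖² ≥ 0` gives the rate;
the weights are a dual certificate of the corresponding performance-estimation problem.
-/

open RealInnerProductSpace

/-- `f` is continuously differentiable, `μ`-strongly convex and `L`-smooth on `ℝⁿ`. -/
def SmoothStronglyConvex {n : ℕ} (μ L : ℝ) (f : EuclideanSpace ℝ (Fin n) → ℝ) : Prop :=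
  ContDiff ℝ 1 f ∧
  ConvexOn ℝ Set.univ (fun x => f x - μ / 2 * ‖x‖ ^ 2) ∧
  ∀ x y : EuclideanSpace ℝ (Fin n), ‖gradient f x - gradient f y‖ ≤ L * ‖x - y‖

section

variable {E : Type*} [NormedAddCommGroup E] [InnerProductSpace ℝ E] [CompleteSpace E]
  {f : E → ℝ} {g : E → E}

lemma HasGradientAt.hasDerivAt_add_smul {g' x v : E} {s : ℝ}
    (hf : HasGradientAt f g' (x + s • v)) :
    HasDerivAt (fun r : ℝ => f (x + r • v)) ⟪g', v⟫ s := by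
  have hline : HasDerivAt (fun r : ℝ => x + r • v) v s := by
    simpa using ((hasDerivAt_id s).smul_const v).const_add x
  have := hf.hasFDerivAt.comp_hasDerivAt s hline
  simp only [InnerProductSpace.toDual_apply_apply] at this
  exact this

lemma HasGradientAt.sub_mul_norm_sq {g' x : E} (hf : HasGradientAt f g' x) (μ : ℝ) :
    HasGradientAt (fun z => f z - μ / 2 * ‖z‖ ^ 2) (g' - μ • x) x := by
  rw [hasGradientAt_iff_hasFDerivAt]
  refine (hf.hasFDerivAt.sub
    ((hasStrictFDerivAt_norm_sq x).hasFDerivAt.const_mul (μ / 2))).congr_fderiv ?_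
  ext v
  simp only [sub_apply, InnerProductSpace.toDual_apply_apply, smul_apply, coe_innerSL_apply,
    nsmul_eq_mul, smul_eq_mul, map_sub, map_smul]
  ring

lemma ConvexOn.add_inner_le_of_hasGradientAt (hconv : ConvexOn ℝ Set.univ f) {g' x : E}
    (hf : HasGradientAt f g' x) (y : E) : f x + ⟪g', y - x⟫ ≤ f y := by
  have hline : ConvexOn ℝ Set.univ (fun r : ℝ => f (x + r • (y - x))) := by
    have heq : (fun r : ℝ => f (x + r • (y - x))) = f ∘ AffineMap.lineMap x y := by
      funext r
      simp [AffineMap.lineMap_apply, add_comm]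
    simpa [heq] using hconv.comp_affineMap (AffineMap.lineMap x y)
  have hderiv : HasDerivAt (fun r : ℝ => f (x + r • (y - x))) ⟪g', y - x⟫ 0 :=
    HasGradientAt.hasDerivAt_add_smul (by rwa [zero_smul, add_zero])
  have := hline.le_slope_of_hasDerivAt (Set.mem_univ 0) (Set.mem_univ 1) zero_lt_one hderiv
  simp only [slope_def_field, one_smul, add_sub_cancel, zero_smul, add_zero, sub_zero,
    div_one] at this
  linarith

lemma quadratic_upper_bound_of_lipschitz_gradient {C : ℝ} (hg : ∀ x, HasGradientAt f (g x) x)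
    (hlip : ∀ x y, ‖g x - g y‖ ≤ C * ‖x - y‖) (x v : E) :
    f (x + v) ≤ f x + ⟪g x, v⟫ + C / 2 * ‖v‖ ^ 2 := by
  set φ : ℝ → ℝ := fun s => f (x + s • v) - s * ⟪g x, v⟫ - C / 2 * s ^ 2 * ‖v‖ ^ 2
  have hφ : ∀ s : ℝ, HasDerivAt φ (⟪g (x + s • v) - g x, v⟫ - C * s * ‖v‖ ^ 2) s := by
    intro s
    refine (((hg (x + s • v)).hasDerivAt_add_smul.sub ((hasDerivAt_id s).mul_const ⟪g x, v⟫)).sub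
      (((hasDerivAt_pow 2 s).const_mul (C / 2)).mul_const (‖v‖ ^ 2))).congr_deriv ?_
    simp only [inner_sub_left, one_mul, Nat.cast_ofNat]
    ring
  have hanti : AntitoneOn φ (Set.Icc 0 1) := by
    refine antitoneOn_of_hasDerivWithinAt_nonpos (convex_Icc 0 1)
      (fun s _ => (hφ s).continuousAt.continuousWithinAt) (fun s _ => (hφ s).hasDerivWithinAt) ?_
    intro s hs
    rw [interior_Icc] at hs
    have hgrad : ⟪g (x + s • v) - g x, v⟫ ≤ C * s * ‖v‖ ^ 2 :=
      calc ⟪g (x + s • v) - g x, v⟫ ≤ ‖g (x + s • v) - g x‖ * ‖v‖ := real_inner_le_norm _ _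
        _ ≤ C * ‖s • v‖ * ‖v‖ := by
          gcongr
          simpa using hlip (x + s • v) x
        _ = C * s * ‖v‖ ^ 2 := by rw [norm_smul, Real.norm_of_nonneg hs.1.le]; ring
    linarith
  have h10 : φ 1 ≤ φ 0 :=
    hanti (Set.left_mem_Icc.2 zero_le_one) (Set.right_mem_Icc.2 zero_le_one) zero_le_one
  simp only [φ, one_smul, one_mul, one_pow, mul_one, zero_smul, add_zero, zero_mul, sub_zero,
    zero_pow two_ne_zero, mul_zero] at h10
  linarith

lemma ConvexOn.sq_norm_sub_gradient_le {C : ℝ} (hC : 0 < C) (hconv : ConvexOn ℝ Set.univ f)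
    (hg : ∀ x, HasGradientAt f (g x) x)
    (hub : ∀ x v, f (x + v) ≤ f x + ⟪g x, v⟫ + C / 2 * ‖v‖ ^ 2) (x y : E) :
    ‖g y - g x‖ ^ 2 ≤ 2 * C * (f y - f x - ⟪g x, y - x⟫) := by
  set D := g y - g x
  -- Compare the two bounds at `y - C⁻¹ • D`, where the quadratic upper bound at `y` is tightest.
  have hlow := hconv.add_inner_le_of_hasGradientAt (hg x) (y - C⁻¹ • D)
  have hup := hub y (-(C⁻¹ • D))
  rw [sub_right_comm, inner_sub_right, real_inner_smul_right] at hlow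
  rw [← sub_eq_add_neg, inner_neg_right, real_inner_smul_right, norm_neg, norm_smul,
    Real.norm_of_nonneg (by positivity)] at hup
  have hD : ⟪g y, D⟫ - ⟪g x, D⟫ = ‖D‖ ^ 2 := by
    rw [← inner_sub_left, real_inner_self_eq_norm_sq]
  have hCinv : C * C⁻¹ = 1 := mul_inv_cancel₀ hC.ne'
  linear_combination
    (2 * C) * (hlow + hup) - (2 * C * C⁻¹) * hD + (‖D‖ ^ 2 * (C * C⁻¹ - 1)) * hCinv

lemma sq_norm_sub_gradient_le_of_strongConvex {μ L : ℝ} (hμL : μ < L)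
    (hg : ∀ x, HasGradientAt f (g x) x)
    (hconv : ConvexOn ℝ Set.univ (fun x => f x - μ / 2 * ‖x‖ ^ 2))
    (hlip : ∀ x y, ‖g x - g y‖ ≤ L * ‖x - y‖) (x y : E) :
    μ * (L - μ) * ‖y - x‖ ^ 2 + ‖g y - g x - μ • (y - x)‖ ^ 2 ≤
      2 * (L - μ) * (f y - f x - ⟪g x, y - x⟫) := by
  have hg' : ∀ x, HasGradientAt (fun z => f z - μ / 2 * ‖z‖ ^ 2) (g x - μ • x) x :=
    fun x => (hg x).sub_mul_norm_sq μ
  have hub : ∀ x v, f (x + v) - μ / 2 * ‖x + v‖ ^ 2 ≤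
      f x - μ / 2 * ‖x‖ ^ 2 + ⟪g x - μ • x, v⟫ + (L - μ) / 2 * ‖v‖ ^ 2 := by
    intro x v
    have := quadratic_upper_bound_of_lipschitz_gradient hg hlip x v
    rw [norm_add_sq_real, inner_sub_left, real_inner_smul_left]
    linarith
  have := hconv.sq_norm_sub_gradient_le (sub_pos.2 hμL) hg' hub x y
  have hgrad : g y - μ • y - (g x - μ • x) = g y - g x - μ • (y - x) := by module
  have hy : ‖y‖ ^ 2 = ‖x‖ ^ 2 + 2 * ⟪x, y - x⟫ + ‖y - x‖ ^ 2 := by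
    simpa using norm_add_sq_real x (y - x)
  rw [hgrad, inner_sub_left, real_inner_smul_left, hy] at this
  linarith

lemma IsLocalMin.hasGradientAt_eq_zero {g' x : E} (hmin : IsLocalMin f x)
    (hf : HasGradientAt f g' x) : g' = 0 := by
  simpa using hmin.hasFDerivAt_eq_zero hf.hasFDerivAt

lemma gradient_step_two_div_rate {μ L : ℝ} (hμ : 0 < μ) (hμL : μ < L)
    (hg : ∀ x, HasGradientAt f (g x) x)
    (hconv : ConvexOn ℝ Set.univ (fun x => f x - μ / 2 * ‖x‖ ^ 2))
    (hlip : ∀ x y, ‖g x - g y‖ ≤ L * ‖x - y‖) {xstar : E} (hmin : ∀ x, f xstar ≤ f x) (x₀ : E) :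
    f (x₀ - (2 / (L + μ)) • g x₀) - f xstar ≤ ((L - μ) / (L + μ)) ^ 2 * (f x₀ - f xstar) := by
  have hS : 0 < L + μ := by linarith
  have hM : 0 < L - μ := by linarith
  set t := 2 / (L + μ)
  have ht : (L + μ) * t = 2 := mul_div_cancel₀ 2 hS.ne'
  set y := x₀ - t • g x₀
  set u := x₀ - xstar
  have hgstar : g xstar = 0 := IsLocalMin.hasGradientAt_eq_zero (.of_forall hmin) (hg xstar)
  have I1 := sq_norm_sub_gradient_le_of_strongConvex hμL hg hconv hlip y x₀
  have I2 := sq_norm_sub_gradient_le_of_strongConvex hμL hg hconv hlip x₀ xstar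
  have I3 := sq_norm_sub_gradient_le_of_strongConvex hμL hg hconv hlip y xstar
  have hw : 0 ≤ ‖g x₀ + g y - (μ * L * t) • u‖ ^ 2 := by positivity
  have e1 : x₀ - y = t • g x₀ := by simp [y]
  have e2 : xstar - x₀ = -u := by simp [u]
  have e3 : xstar - y = t • g x₀ - u := by simp only [y, u]; abel
  rw [e1] at I1
  rw [e2, hgstar] at I2
  rw [e3, hgstar] at I3
  simp only [← real_inner_self_eq_norm_sq, inner_sub_left, inner_sub_right, inner_add_left,
    inner_add_right, real_inner_smul_left, real_inner_smul_right, inner_neg_left, inner_neg_right,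
    zero_sub, neg_neg, real_inner_comm u, real_inner_comm (g y) (g x₀)] at I1 I2 I3 hw
  have key : 2 * (L - μ) * ((L + μ) ^ 2 * (f y - f xstar)) ≤
      2 * (L - μ) * ((L - μ) ^ 2 * (f x₀ - f xstar)) := by
    linear_combination (L - μ) * (L + μ) * I1 + 2 * μ * (L - μ) * I2 + 2 * μ * (L + μ) * I3
      + (L + μ) ^ 2 * hw
      + (-2 * L * (L + μ) * ⟪g y, g x₀⟫ - 2 * μ * L * (L + μ) * ⟪u, g y⟫
        - 2 * μ * L * (L - μ) * ⟪u, g x₀⟫ - (μ * L * (L + μ) * t + 2 * μ ^ 2) * ⟪g x₀, g x₀⟫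
        + μ ^ 2 * L ^ 2 * (2 + (L + μ) * t) * ⟪u, u⟫) * ht
  have := le_of_mul_le_mul_left key (by positivity)
  rw [div_pow, div_mul_eq_mul_div, le_div_iff₀ (by positivity)]
  linarith

end

theorem stmt0 {n : ℕ} (μ L : ℝ) (hμ : 0 < μ) (hμL : μ < L)
    (f : EuclideanSpace ℝ (Fin n) → ℝ) (hf : SmoothStronglyConvex μ L f)
    (xstar : EuclideanSpace ℝ (Fin n)) (hmin : ∀ x, f xstar ≤ f x)
    (x₀ x₁ : EuclideanSpace ℝ (Fin n)) (γ : ℝ)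
    (hγ : ∀ γ' : ℝ, f (x₀ - γ • gradient f x₀) ≤ f (x₀ - γ' • gradient f x₀))
    (hx₁ : x₁ = x₀ - γ • gradient f x₀) :
    f x₁ - f xstar ≤ ((L - μ) / (L + μ)) ^ 2 * (f x₀ - f xstar) := by
  obtain ⟨hdiff, hconv, hlip⟩ := hf
  have hg : ∀ x, HasGradientAt f (gradient f x) x :=
    fun x => (hdiff.differentiable one_ne_zero x).hasGradientAt
  calc f x₁ - f xstar ≤ f (x₀ - (2 / (L + μ)) • gradient f x₀) - f xstar := by
        rw [hx₁]
        exact sub_le_sub_right (hγ _) _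
    _ ≤ ((L - μ) / (L + μ)) ^ 2 * (f x₀ - f xstar) :=
        gradient_step_two_div_rate hμ hμL hg hconv hlip hmin x₀
end

section
/- Let f ∈ F_{μ,L}(ℝ^n) with 0 < μ < L, x* a global minimizer of f, f* = f(x*), and x₀ ∈ ℝ^n arbitrary. Then for every N ≥ ⌈(1/2)log(1/ε)/log((L+μ)/(L-μ))⌉ with ε > 0, the N-th iterate x_N of gradient descent with exact line search started at x₀ satisfies (f(x_N) - f*)/(f(x₀) - f*) ≤ ε (assuming f(x₀) > f*). -/
open RealInnerProductSpace

/-!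
The argument is the one of de Klerk, Glineur and Taylor. For `f ∈ F_{μ,L}` and any two points
`a, b` one has the interpolation inequality
  `μ (L - μ) ‖b - a‖² + ‖∇f b - ∇f a - μ (b - a)‖² ≤ 2 (L - μ) (f b - f a - ⟪∇f a, b - a⟫)`,
obtained by evaluating the strong-convexity lower model at `a` and the `L`-smooth upper model at
`b` at a common, optimally chosen point. Write it for the three pairs formed by `x`,
`x⁺ = x - γ ∇f x` and `x⋆`, and add the two optimality conditions of the exact line search,
`⟪∇f x⁺, ∇f x⟫ = 0` and `⟪∇f x⁺, x - x⁺⟫ = 0`: a nonnegative combination of these plus two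
squares is `(L - μ) ((L + μ)² (f x⁺ - f⋆) - (L - μ)² (f x - f⋆)) ≤ 0`. So each step contracts
the gap by `((L - μ) / (L + μ))²`, and the iteration count follows by taking logarithms.
-/

section

variable {E : Type*} [NormedAddCommGroup E] [InnerProductSpace ℝ E]

theorem sq_mul_sub_le_of_interpolation {μ L f₀ f₁ f₂ : ℝ} {x₀ x₁ x₂ g₀ g₁ : E}
    (hμ : 0 < μ) (hμL : μ < L)
    (h₀ : μ * (L - μ) * ‖x₂ - x₀‖ ^ 2 + ‖-g₀ - μ • (x₂ - x₀)‖ ^ 2 ≤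
      2 * (L - μ) * (f₂ - f₀ - ⟪g₀, x₂ - x₀⟫))
    (h₁ : μ * (L - μ) * ‖x₂ - x₁‖ ^ 2 + ‖-g₁ - μ • (x₂ - x₁)‖ ^ 2 ≤
      2 * (L - μ) * (f₂ - f₁ - ⟪g₁, x₂ - x₁⟫))
    (h₁₀ : μ * (L - μ) * ‖x₀ - x₁‖ ^ 2 + ‖g₀ - g₁ - μ • (x₀ - x₁)‖ ^ 2 ≤
      2 * (L - μ) * (f₀ - f₁ - ⟪g₁, x₀ - x₁⟫))
    (hg : ⟪g₁, g₀⟫ = 0) (hx : ⟪g₁, x₀ - x₁⟫ = 0) :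
    (L + μ) ^ 2 * (f₁ - f₂) ≤ (L - μ) ^ 2 * (f₀ - f₂) := by
  have hD : 0 < L - μ := sub_pos.mpr hμL
  have hL : 0 < L := hμ.trans hμL
  have s₁ : 0 ≤ ‖(μ * (L - μ)) • (x₀ - x₂) + (μ * (L + μ)) • (x₁ - x₂)
      - (L - μ) • g₀ - (L + μ) • g₁‖ ^ 2 := by
    positivity
  have s₂ : 0 ≤ ‖(L + μ) • (x₀ - x₁) - (2 : ℝ) • g₀‖ ^ 2 := by positivity
  simp only [← real_inner_self_eq_norm_sq, inner_add_left, inner_add_right, inner_sub_left,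
    inner_sub_right, inner_neg_left, inner_neg_right, real_inner_smul_right, real_inner_comm]
    at h₀ h₁ h₁₀ s₁ s₂ hg hx ⊢
  refine le_of_mul_le_mul_left ?_ hD
  linear_combination (μ * (L - μ)) * h₀ + (μ * (L + μ)) * h₁ + ((L - μ) * (L + μ) / 2) * h₁₀
    + (1 / 2) * s₁ + (μ * (L - μ) / 2) * s₂ - (L - μ) * (L + μ) ^ 2 * hx
    + 2 * (L ^ 2 - μ ^ 2) * hg

section

variable [CompleteSpace E] {f : E → ℝ}

theorem hasDerivAt_comp_add_smul {x d : E} {t : ℝ} (hf : DifferentiableAt ℝ f (x + t • d)) :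
    HasDerivAt (fun s : ℝ => f (x + s • d)) ⟪gradient f (x + t • d), d⟫ t := by
  have hline : HasDerivAt (fun s : ℝ => x + s • d) d t := by
    simpa using ((hasDerivAt_id t).smul_const d).const_add x
  simpa [Function.comp_def] using hf.hasGradientAt.hasFDerivAt.comp_hasDerivAt t hline

theorem gradient_eq_zero_of_isLocalMin {a : E} (h : IsLocalMin f a) : gradient f a = 0 := by
  simp [gradient, h.fderiv_eq_zero]

theorem inner_gradient_eq_zero_of_forall_le_line {x g : E} {γ : ℝ}
    (hf : DifferentiableAt ℝ f (x - γ • g)) (hγ : ∀ γ' : ℝ, f (x - γ • g) ≤ f (x - γ' • g)) :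
    ⟪gradient f (x - γ • g), g⟫ = 0 := by
  have hxg (s : ℝ) : x + s • -g = x - s • g := by rw [smul_neg, ← sub_eq_add_neg]
  have hmin : IsLocalMin (fun s : ℝ => f (x + s • -g)) γ :=
    Filter.Eventually.of_forall fun s => by simpa only [hxg] using hγ s
  have hline := hasDerivAt_comp_add_smul (f := f) (d := -g) (t := γ) (by rwa [hxg])
  rw [hxg γ] at hline
  simpa only [inner_neg_right, neg_eq_zero] using hmin.hasDerivAt_eq_zero hline

theorem le_add_inner_gradient_add_sq {L : ℝ} (hf : Differentiable ℝ f)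
    (hlip : ∀ x y, ‖gradient f x - gradient f y‖ ≤ L * ‖x - y‖) (x y : E) :
    f y ≤ f x + ⟪gradient f x, y - x⟫ + L / 2 * ‖y - x‖ ^ 2 := by
  set d := y - x
  have hφ (t : ℝ) : HasDerivAt (fun s : ℝ => f (x + s • d)) ⟪gradient f (x + t • d), d⟫ t :=
    hasDerivAt_comp_add_smul (hf _)
  have hmodel (t : ℝ) :
      HasDerivAt (fun s : ℝ => f x + s * ⟪gradient f x, d⟫ + L / 2 * s ^ 2 * ‖d‖ ^ 2)
        (⟪gradient f x, d⟫ + L * t * ‖d‖ ^ 2) t := by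
    refine ((((hasDerivAt_id t).mul_const _).const_add (f x)).add
      (((hasDerivAt_pow 2 t).const_mul (L / 2)).mul_const (‖d‖ ^ 2))).congr_deriv ?_
    simp only [Nat.cast_ofNat, Nat.add_one_sub_one, pow_one, one_mul]
    ring
  have hbound : ∀ t ∈ Set.Ico (0 : ℝ) 1,
      ⟪gradient f (x + t • d), d⟫ ≤ ⟪gradient f x, d⟫ + L * t * ‖d‖ ^ 2 := by
    intro t ht
    calc ⟪gradient f (x + t • d), d⟫
        = ⟪gradient f x, d⟫ + ⟪gradient f (x + t • d) - gradient f x, d⟫ := by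
          rw [inner_sub_left]; ring
      _ ≤ ⟪gradient f x, d⟫ + L * ‖x + t • d - x‖ * ‖d‖ := by
          gcongr
          exact (real_inner_le_norm _ _).trans
            (mul_le_mul_of_nonneg_right (hlip _ _) (norm_nonneg _))
      _ = ⟪gradient f x, d⟫ + L * t * ‖d‖ ^ 2 := by
          rw [add_sub_cancel_left, norm_smul, Real.norm_of_nonneg ht.1]; ring
  have := image_le_of_deriv_right_le_deriv_boundary
    (fun t _ => (hφ t).continuousAt.continuousWithinAt) (fun t _ => (hφ t).hasDerivWithinAt)
    (by simp) (fun t _ => (hmodel t).continuousAt.continuousWithinAt)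
    (fun t _ => (hmodel t).hasDerivWithinAt) hbound (Set.right_mem_Icc.2 zero_le_one)
  simpa [d] using this

theorem add_inner_gradient_add_sq_le {μ : ℝ} (hf : Differentiable ℝ f)
    (hconv : ConvexOn ℝ Set.univ (fun x => f x - μ / 2 * ‖x‖ ^ 2)) (x y : E) :
    f x + ⟪gradient f x, y - x⟫ + μ / 2 * ‖y - x‖ ^ 2 ≤ f y := by
  set d := y - x
  set ψ := fun s : ℝ => f (x + s • d) - μ / 2 * ‖x + s • d‖ ^ 2
  have hψconv : ConvexOn ℝ Set.univ ψ := by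
    have hline : ψ = (fun x => f x - μ / 2 * ‖x‖ ^ 2) ∘ AffineMap.lineMap x y := by
      funext s
      simp [ψ, d, AffineMap.lineMap_apply_module', add_comm]
    simpa [hline] using hconv.comp_affineMap (AffineMap.lineMap x y)
  have hψ : HasDerivAt ψ (⟪gradient f x, d⟫ - μ / 2 * (2 * ⟪x, d⟫)) 0 := by
    have hf' := hasDerivAt_comp_add_smul (f := f) (x := x) (d := d) (t := 0) (by simpa using hf x)
    have hsq := (((hasDerivAt_id (0 : ℝ)).smul_const d).const_add x).norm_sq
    have := hf'.sub (hsq.const_mul (μ / 2))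
    simp only [zero_smul, add_zero, id, one_smul] at this
    exact this
  have hslope := hψconv.le_slope_of_hasDerivAt (Set.mem_univ 0) (Set.mem_univ 1) zero_lt_one hψ
  have hy : ‖y‖ ^ 2 = ‖x‖ ^ 2 + 2 * ⟪x, d⟫ + ‖d‖ ^ 2 := by
    rw [← norm_add_sq_real, add_sub_cancel]
  simp only [slope, ψ, vsub_eq_sub, sub_zero, inv_one, one_smul, zero_smul, add_zero] at hslope
  rw [show x + d = y from add_sub_cancel x y, hy] at hslope
  linarith

theorem interpolation_inequality {μ L : ℝ} (hμL : μ < L) (hf : Differentiable ℝ f)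
    (hconv : ConvexOn ℝ Set.univ (fun x => f x - μ / 2 * ‖x‖ ^ 2))
    (hlip : ∀ x y, ‖gradient f x - gradient f y‖ ≤ L * ‖x - y‖) (a b : E) :
    μ * (L - μ) * ‖b - a‖ ^ 2 + ‖gradient f b - gradient f a - μ • (b - a)‖ ^ 2 ≤
      2 * (L - μ) * (f b - f a - ⟪gradient f a, b - a⟫) := by
  set w := gradient f b - gradient f a - μ • (b - a)
  have hD : 0 < L - μ := sub_pos.2 hμL
  -- lower model at `a` vs. upper model at `b`, both at `b + e`; the best `e` is `-(L - μ)⁻¹ • w`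
  have key (e : E) :
      μ / 2 * ‖b - a‖ ^ 2 - ⟪w, e⟫ - (L - μ) / 2 * ‖e‖ ^ 2 ≤
        f b - f a - ⟪gradient f a, b - a⟫ := by
    have hlow := add_inner_gradient_add_sq_le hf hconv a (b + e)
    have hup := le_add_inner_gradient_add_sq hf hlip b (b + e)
    rw [add_sub_right_comm, inner_add_right, norm_add_sq_real] at hlow
    rw [add_sub_cancel_left] at hup
    rw [inner_sub_left, inner_sub_left, real_inner_smul_left]
    linarith
  have hopt :=
    mul_le_mul_of_nonneg_left (key (-(L - μ)⁻¹ • w)) (by positivity : 0 ≤ 2 * (L - μ))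
  rw [real_inner_smul_right, real_inner_self_eq_norm_sq, norm_smul, mul_pow, Real.norm_eq_abs,
    sq_abs] at hopt
  refine Eq.trans_le ?_ hopt
  field_simp
  ring

theorem sq_mul_sub_le_of_exactLineSearch {μ L : ℝ} (hμ : 0 < μ) (hμL : μ < L)
    (hf : Differentiable ℝ f) (hconv : ConvexOn ℝ Set.univ (fun x => f x - μ / 2 * ‖x‖ ^ 2))
    (hlip : ∀ x y, ‖gradient f x - gradient f y‖ ≤ L * ‖x - y‖)
    {xstar : E} (hmin : ∀ y, f xstar ≤ f y) {x : E} {γ : ℝ}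
    (hγ : ∀ γ' : ℝ, f (x - γ • gradient f x) ≤ f (x - γ' • gradient f x)) :
    (L + μ) ^ 2 * (f (x - γ • gradient f x) - f xstar) ≤ (L - μ) ^ 2 * (f x - f xstar) := by
  have hstar : gradient f xstar = 0 := gradient_eq_zero_of_isLocalMin (.of_forall hmin)
  have horth := inner_gradient_eq_zero_of_forall_le_line (hf _) hγ
  have hinterp := interpolation_inequality hμL hf hconv hlip
  have h₀ := hinterp x xstar
  have h₁ := hinterp (x - γ • gradient f x) xstar
  rw [hstar, zero_sub] at h₀ h₁
  refine sq_mul_sub_le_of_interpolation hμ hμL h₀ h₁ (hinterp _ x) horth ?_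
  rw [sub_sub_cancel, real_inner_smul_right, horth, mul_zero]

end

end

theorem le_pow_mul_of_le_mul {u : ℕ → ℝ} {c : ℝ} (hc : 0 ≤ c) (h : ∀ n, u (n + 1) ≤ c * u n)
    (n : ℕ) : u n ≤ c ^ n * u 0 := by
  induction n with
  | zero => simp
  | succ n ih =>
    calc u (n + 1) ≤ c * u n := h n
      _ ≤ c * (c ^ n * u 0) := by gcongr
      _ = c ^ (n + 1) * u 0 := by ring

theorem inv_sq_pow_le_of_ceil_le {R ε : ℝ} {N : ℕ} (hR : 1 < R) (hε : 0 < ε)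
    (hN : ⌈(1 / 2 : ℝ) * Real.log (1 / ε) / Real.log R⌉₊ ≤ N) : (R⁻¹ ^ 2) ^ N ≤ ε := by
  have hR₀ : 0 < R := one_pos.trans hR
  have hlog : Real.log (1 / ε) ≤ Real.log (R ^ (2 * N)) := by
    have := Nat.ceil_le.1 hN
    rw [div_le_iff₀ (Real.log_pos hR)] at this
    rw [Real.log_pow]
    push_cast
    linarith
  have hpow : 1 / ε ≤ R ^ (2 * N) :=
    (Real.log_le_log_iff (by positivity) (pow_pos hR₀ _)).1 hlog
  rw [← pow_mul, inv_pow]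
  exact inv_le_of_inv_le₀ hε (by rwa [one_div] at hpow)

theorem stmt1 {n : ℕ} (μ L : ℝ) (hμ : 0 < μ) (hμL : μ < L)
    (f : EuclideanSpace ℝ (Fin n) → ℝ) (hf : SmoothStronglyConvex μ L f)
    (xstar : EuclideanSpace ℝ (Fin n)) (hmin : ∀ y, f xstar ≤ f y)
    (x : ℕ → EuclideanSpace ℝ (Fin n))
    (hiter : ∀ i : ℕ, ∃ γ : ℝ,
      (∀ γ' : ℝ, f (x i - γ • gradient f (x i)) ≤ f (x i - γ' • gradient f (x i))) ∧
      x (i + 1) = x i - γ • gradient f (x i))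
    (hx₀ : f xstar < f (x 0))
    (ε : ℝ) (hε : 0 < ε) (N : ℕ)
    (hN : ⌈(1 / 2 : ℝ) * Real.log (1 / ε) / Real.log ((L + μ) / (L - μ))⌉₊ ≤ N) :
    (f (x N) - f xstar) / (f (x 0) - f xstar) ≤ ε := by
  obtain ⟨hC1, hconv, hlip⟩ := hf
  have hD : 0 < L - μ := sub_pos.2 hμL
  have hR : 1 < (L + μ) / (L - μ) := (one_lt_div hD).2 (by linarith)
  have hstep (i : ℕ) :
      f (x (i + 1)) - f xstar ≤ ((L + μ) / (L - μ))⁻¹ ^ 2 * (f (x i) - f xstar) := by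
    obtain ⟨γ, hγ, hx⟩ := hiter i
    rw [hx, inv_div, div_pow, div_mul_eq_mul_div, le_div_iff₀ (pow_pos (by linarith) 2), mul_comm]
    exact sq_mul_sub_le_of_exactLineSearch hμ hμL (hC1.differentiable one_ne_zero) hconv hlip
      hmin hγ
  have hF₀ : 0 < f (x 0) - f xstar := sub_pos.2 hx₀
  rw [div_le_iff₀ hF₀]
  calc f (x N) - f xstar
      ≤ (((L + μ) / (L - μ))⁻¹ ^ 2) ^ N * (f (x 0) - f xstar) :=
        le_pow_mul_of_le_mul (u := fun i => f (x i) - f xstar) (by positivity) hstep N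
    _ ≤ ε * (f (x 0) - f xstar) := by gcongr; exact inv_sq_pow_le_of_ceil_le hR hε hN
end

section
/- Let Q be a symmetric positive definite n×n real matrix whose eigenvalues all lie in [μ, L] with 0 < μ ≤ L. Then for every unit vector x ∈ ℝ^n, (xᵀQx)(xᵀQ⁻¹x) ≤ (μ+L)²/(4μL). -/
/-!
Diagonalise `Q = U diag(λ) Uᵀ` with `U` orthogonal. Then `Q⁻¹ = U diag(λ⁻¹) Uᵀ`, and with
`wᵢ = (Uᵀx)ᵢ²`, a probability vector, the two quadratic forms become the averages `∑ wᵢ λᵢ` and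
`∑ wᵢ λᵢ⁻¹`. On `[μ, L]` the convex function `t ↦ t + μL/t` is at most `μ + L`, so
`∑ wᵢ λᵢ + μL ∑ wᵢ λᵢ⁻¹ ≤ μ + L`, and AM-GM turns this bound on the sum into the bound
`(μ + L)²/(4μL)` on the product.
-/

open Matrix

lemma add_mul_div_le_add_of_mem_Icc {μ L t : ℝ} (ht : 0 < t) (hμt : μ ≤ t) (htL : t ≤ L) :
    t + μ * L / t ≤ μ + L := by
  have : μ * L ≤ (μ + L - t) * t := by
    nlinarith [mul_nonneg (sub_nonneg.2 hμt) (sub_nonneg.2 htL)]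
  linarith [(div_le_iff₀ ht).2 this]

lemma mul_le_sq_div_of_add_mul_le {a b p s : ℝ} (ha : 0 ≤ a) (hb : 0 ≤ b) (hp : 0 < p)
    (h : a + p * b ≤ s) : a * b ≤ s ^ 2 / (4 * p) := by
  rw [le_div_iff₀ (by positivity)]
  nlinarith [sq_nonneg (a - p * b), mul_self_le_mul_self (by positivity) h]

theorem sum_mul_mul_sum_inv_mul_le {ι : Type*} [Fintype ι] {μ L : ℝ} (hμ : 0 < μ)
    (t w : ι → ℝ) (ht : ∀ i, μ ≤ t i ∧ t i ≤ L) (hw : ∀ i, 0 ≤ w i) (hw_sum : ∑ i, w i = 1) :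
    (∑ i, t i * w i) * (∑ i, (t i)⁻¹ * w i) ≤ (μ + L) ^ 2 / (4 * μ * L) := by
  have ht_pos : ∀ i, 0 < t i := fun i => hμ.trans_le (ht i).1
  obtain ⟨i₀⟩ : Nonempty ι := by
    by_contra h
    simp [not_nonempty_iff.1 h] at hw_sum
  have hL : 0 < L := (ht_pos i₀).trans_le (ht i₀).2
  have hsum : ∑ i, t i * w i + μ * L * ∑ i, (t i)⁻¹ * w i ≤ μ + L := calc
    _ = ∑ i, (t i + μ * L / t i) * w i := by
      rw [Finset.mul_sum, ← Finset.sum_add_distrib]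
      exact Finset.sum_congr rfl fun i _ => by ring
    _ ≤ ∑ i, (μ + L) * w i := Finset.sum_le_sum fun i _ =>
      mul_le_mul_of_nonneg_right (add_mul_div_le_add_of_mem_Icc (ht_pos i) (ht i).1 (ht i).2)
        (hw i)
    _ = μ + L := by rw [← Finset.mul_sum, hw_sum, mul_one]
  rw [mul_assoc]
  exact mul_le_sq_div_of_add_mul_le
    (Finset.sum_nonneg fun i _ => mul_nonneg (ht_pos i).le (hw i))
    (Finset.sum_nonneg fun i _ => mul_nonneg (inv_nonneg.2 (ht_pos i).le) (hw i))
    (mul_pos hμ hL) hsum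

namespace Matrix

variable {ι : Type*} [Fintype ι] [DecidableEq ι]

lemma dotProduct_conj_diagonal_mulVec (U : Matrix ι ι ℝ) (d x : ι → ℝ) :
    x ⬝ᵥ (U * diagonal d * Uᵀ) *ᵥ x = ∑ i, d i * (Uᵀ *ᵥ x) i ^ 2 := by
  rw [← mulVec_mulVec, ← mulVec_mulVec, dotProduct_mulVec, ← mulVec_transpose]
  simp only [dotProduct, mulVec_diagonal]
  exact Finset.sum_congr rfl fun i _ => by ring

lemma inv_conj_diagonal {U : Matrix ι ι ℝ} (hU : Uᵀ * U = 1) {d : ι → ℝ} (hd : ∀ i, d i ≠ 0) :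
    (U * diagonal d * Uᵀ)⁻¹ = U * diagonal d⁻¹ * Uᵀ := by
  refine inv_eq_right_inv ?_
  calc U * diagonal d * Uᵀ * (U * diagonal d⁻¹ * Uᵀ)
      = U * (diagonal d * (Uᵀ * U) * diagonal d⁻¹) * Uᵀ := by noncomm_ring
    _ = U * Uᵀ := by
      rw [hU, mul_one, diagonal_mul_diagonal]
      simp [mul_inv_cancel₀ (hd _)]
    _ = 1 := mul_eq_one_comm.1 hU

lemma sum_sq_transpose_mulVec {U : Matrix ι ι ℝ} (hU : U * Uᵀ = 1) (x : ι → ℝ) :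
    ∑ i, (Uᵀ *ᵥ x) i ^ 2 = ∑ i, x i ^ 2 := by
  have : (Uᵀ *ᵥ x) ⬝ᵥ (Uᵀ *ᵥ x) = x ⬝ᵥ x := by
    rw [mulVec_transpose, ← dotProduct_mulVec, ← mulVec_transpose, mulVec_mulVec, hU, one_mulVec]
  simpa only [dotProduct, sq] using this

namespace IsHermitian

variable {Q : Matrix ι ι ℝ} (hQ : Q.IsHermitian)

lemma transpose_eigenvectorUnitary_mul_self :
    (hQ.eigenvectorUnitary : Matrix ι ι ℝ)ᵀ * hQ.eigenvectorUnitary = 1 := by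
  simpa [star_eq_conjTranspose] using Unitary.star_mul_self_of_mem hQ.eigenvectorUnitary.2

lemma eq_conj_diagonal_eigenvalues :
    Q = hQ.eigenvectorUnitary * diagonal hQ.eigenvalues *
      (hQ.eigenvectorUnitary : Matrix ι ι ℝ)ᵀ := by
  simpa [star_eq_conjTranspose] using hQ.spectral_theorem

lemma dotProduct_mulVec_eq_sum_eigenvalues (x : ι → ℝ) :
    x ⬝ᵥ Q *ᵥ x =
      ∑ i, hQ.eigenvalues i * ((hQ.eigenvectorUnitary : Matrix ι ι ℝ)ᵀ *ᵥ x) i ^ 2 := by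
  conv_lhs => rw [hQ.eq_conj_diagonal_eigenvalues]
  exact dotProduct_conj_diagonal_mulVec _ _ x

lemma dotProduct_inv_mulVec_eq_sum_inv_eigenvalues (h : ∀ i, hQ.eigenvalues i ≠ 0)
    (x : ι → ℝ) :
    x ⬝ᵥ Q⁻¹ *ᵥ x =
      ∑ i, (hQ.eigenvalues i)⁻¹ * ((hQ.eigenvectorUnitary : Matrix ι ι ℝ)ᵀ *ᵥ x) i ^ 2 := by
  conv_lhs => rw [hQ.eq_conj_diagonal_eigenvalues,
    inv_conj_diagonal hQ.transpose_eigenvectorUnitary_mul_self h]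
  exact dotProduct_conj_diagonal_mulVec _ _ x

end IsHermitian

end Matrix

open Matrix in
theorem stmt7_general {n : ℕ} (μ L : ℝ) (hμ : 0 < μ)
    (Q : Matrix (Fin n) (Fin n) ℝ) (hQ : Q.IsHermitian)
    (heig : ∀ i : Fin n, μ ≤ hQ.eigenvalues i ∧ hQ.eigenvalues i ≤ L)
    (x : Fin n → ℝ) (hx : ∑ i, x i ^ 2 = 1) :
    (x ⬝ᵥ Q.mulVec x) * (x ⬝ᵥ Q⁻¹.mulVec x) ≤ (μ + L) ^ 2 / (4 * μ * L) := by
  have heig_ne : ∀ i, hQ.eigenvalues i ≠ 0 := fun i => (hμ.trans_le (heig i).1).ne'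
  have hU : (hQ.eigenvectorUnitary : Matrix (Fin n) (Fin n) ℝ) * (hQ.eigenvectorUnitary)ᵀ = 1 :=
    mul_eq_one_comm.1 hQ.transpose_eigenvectorUnitary_mul_self
  rw [hQ.dotProduct_mulVec_eq_sum_eigenvalues,
    hQ.dotProduct_inv_mulVec_eq_sum_inv_eigenvalues heig_ne]
  exact sum_mul_mul_sum_inv_mul_le hμ _ _ heig (fun i => sq_nonneg _)
    ((sum_sq_transpose_mulVec hU x).trans hx)

open Matrix in
theorem stmt7 {n : ℕ} (μ L : ℝ) (hμ : 0 < μ) (hμL : μ ≤ L)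
    (Q : Matrix (Fin n) (Fin n) ℝ) (hQ : Q.IsHermitian) (hpd : Q.PosDef)
    (heig : ∀ i : Fin n, μ ≤ hQ.eigenvalues i ∧ hQ.eigenvalues i ≤ L)
    (x : Fin n → ℝ) (hx : ∑ i, x i ^ 2 = 1) :
    (x ⬝ᵥ Q.mulVec x) * (x ⬝ᵥ Q⁻¹.mulVec x) ≤ (μ + L) ^ 2 / (4 * μ * L) :=
  stmt7_general μ L hμ Q hQ heig x hx
end

section
/- Let f : ℝ^n → ℝ be differentiable, 0 ≤ ε < 1, and suppose d₀ ∈ ℝ^n satisfies ‖-∇f(x₀) - d₀‖ ≤ ε‖∇f(x₀)‖. Let x₁ = x₀ - γd₀ where γ globally minimizes γ ↦ f(x₀ - γd₀). Writing g₀ = ∇f(x₀), g₁ = ∇f(x₁), one has g₀ᵀg₁ ≤ ε‖g₀‖‖g₁‖. -/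
/-! Exact line search makes `d₀` orthogonal to `g₁`, so `⟪g₀, g₁⟫ = ⟪g₀ + d₀, g₁⟫`, and
Cauchy–Schwarz together with `‖g₀ + d₀‖ ≤ ε ‖g₀‖` gives the bound. -/

open RealInnerProductSpace

section

variable {E : Type*} [NormedAddCommGroup E] [InnerProductSpace ℝ E]

theorem inner_gradient_eq_zero_of_isLocalMin_line [CompleteSpace E] {f : E → ℝ} {x d : E}
    {γ : ℝ} (hf : DifferentiableAt ℝ f (x - γ • d))
    (hmin : IsLocalMin (fun t : ℝ => f (x - t • d)) γ) :
    ⟪gradient f (x - γ • d), d⟫ = 0 := by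
  have hline : HasDerivAt (fun t : ℝ => x - t • d) (-d) γ := by
    simpa using ((hasDerivAt_id γ).smul_const d).const_sub x
  have hderiv : HasDerivAt (fun t : ℝ => f (x - t • d)) ⟪gradient f (x - γ • d), -d⟫ γ := by
    simpa [Function.comp_def] using hf.hasGradientAt.hasFDerivAt.comp_hasDerivAt γ hline
  simpa [inner_neg_right] using hmin.hasDerivAt_eq_zero hderiv

theorem inner_le_mul_norm_mul_norm_of_inner_eq_zero {g₀ g₁ d : E} {ε : ℝ}
    (hd : ‖-g₀ - d‖ ≤ ε * ‖g₀‖) (horth : ⟪d, g₁⟫ = 0) :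
    ⟪g₀, g₁⟫ ≤ ε * ‖g₀‖ * ‖g₁‖ :=
  calc ⟪g₀, g₁⟫ = ⟪g₀ + d, g₁⟫ := by rw [inner_add_left, horth, add_zero]
    _ ≤ ‖g₀ + d‖ * ‖g₁‖ := real_inner_le_norm _ _
    _ = ‖-g₀ - d‖ * ‖g₁‖ := by rw [← norm_neg (g₀ + d), neg_add']
    _ ≤ ε * ‖g₀‖ * ‖g₁‖ := mul_le_mul_of_nonneg_right hd (norm_nonneg _)

end

theorem stmt11_general {n : ℕ} (f : EuclideanSpace ℝ (Fin n) → ℝ) (hf : Differentiable ℝ f)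
    (ε : ℝ)
    (x₀ x₁ d₀ : EuclideanSpace ℝ (Fin n)) (γ : ℝ)
    (hd₀ : ‖-gradient f x₀ - d₀‖ ≤ ε * ‖gradient f x₀‖)
    (hγ : ∀ γ' : ℝ, f (x₀ - γ • d₀) ≤ f (x₀ - γ' • d₀))
    (hx₁ : x₁ = x₀ - γ • d₀) :
    ⟪gradient f x₀, gradient f x₁⟫ ≤ ε * ‖gradient f x₀‖ * ‖gradient f x₁‖ := by
  subst hx₁
  have horth := inner_gradient_eq_zero_of_isLocalMin_line (hf _) (Filter.Eventually.of_forall hγ)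
  exact inner_le_mul_norm_mul_norm_of_inner_eq_zero hd₀ (by rwa [real_inner_comm])

theorem stmt11 {n : ℕ} (f : EuclideanSpace ℝ (Fin n) → ℝ) (hf : Differentiable ℝ f)
    (ε : ℝ) (hε0 : 0 ≤ ε) (hε1 : ε < 1)
    (x₀ x₁ d₀ : EuclideanSpace ℝ (Fin n)) (γ : ℝ)
    (hd₀ : ‖-gradient f x₀ - d₀‖ ≤ ε * ‖gradient f x₀‖)
    (hγ : ∀ γ' : ℝ, f (x₀ - γ • d₀) ≤ f (x₀ - γ' • d₀))
    (hx₁ : x₁ = x₀ - γ • d₀) :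
    ⟪gradient f x₀, gradient f x₁⟫ ≤ ε * ‖gradient f x₀‖ * ‖gradient f x₁‖ :=
  stmt11_general f hf ε x₀ x₁ d₀ γ hd₀ hγ hx₁
end
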